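/- arXiv:2411.18584 — 2 statements merged into one kernel-verified Lean document; each statement's English description precedes it below -/
import Mathlib

section
/- Let 1 ≤ i < j ≤ n, and let L and L′ be ordered lists such that the concatenation [L, j, −j, L′] consists of distinct elements of ±[n]. Then the hopping operators h_{i, [L, j, −j, L′]} and h_{i, [L, −j, j, L′]} coincide: for every signed permutation u, h_{i, [L, j, −j, L′]}(u) = h_{i, [L, −j, j, L′]}(u). -/
open Equiv

/-- The key of `a : ℤ` in the total order `1 < 2 < ⋯ < n < -n < ⋯ < -2 < -1` on `±[n]`:
elements of `±[n]` get the keys `1, …, 2n` (in order); anything else gets key `2n+1`. -/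
def dkey (n : ℕ) (a : ℤ) : ℤ :=
  if 1 ≤ a ∧ a ≤ (n : ℤ) then a
  else if -(n : ℤ) ≤ a ∧ a ≤ -1 then 2 * n + 1 + a
  else 2 * n + 1

/-- `a < b` in the total order `1 < 2 < ⋯ < n < -n < ⋯ < -2 < -1` on `±[n]`. -/
def dlt (n : ℕ) (a b : ℤ) : Prop := dkey n a < dkey n b

instance (n : ℕ) (a b : ℤ) : Decidable (dlt n a b) :=
  inferInstanceAs (Decidable (dkey n a < dkey n b))

/-- `a` is an element of `±[n] = {1,…,n} ∪ {-1,…,-n}`. -/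
def inPM (n : ℕ) (a : ℤ) : Prop := a ≠ 0 ∧ |a| ≤ (n : ℤ)

instance (n : ℕ) (a : ℤ) : Decidable (inPM n a) :=
  inferInstanceAs (Decidable (a ≠ 0 ∧ |a| ≤ (n : ℤ)))

/-- The element of `±[n]` whose key is `k` (for `1 ≤ k ≤ 2n`). -/
def ofKey (n : ℕ) (k : ℤ) : ℤ := if k ≤ (n : ℤ) then k else k - (2 * n + 1)

/-- A signed permutation of `±[n]`, viewed as a permutation of `ℤ`:
it commutes with negation and fixes everything outside `±[n]`. -/
def IsSignedPerm (n : ℕ) (w : Perm ℤ) : Prop :=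
  (∀ a : ℤ, w (-a) = -(w a)) ∧ ∀ a : ℤ, (n : ℤ) < |a| → w a = a

/-- An even signed permutation of `±[n]`, i.e. an element of the group `D_n`. -/
def IsEvenSignedPerm (n : ℕ) (w : Perm ℤ) : Prop :=
  IsSignedPerm n w ∧ Even ((Finset.Icc (1 : ℤ) (n : ℤ)).filter fun i => w i < 0).card

/-- The simple generators `s_1, …, s_n` of `D_n`:  for `1 ≤ i ≤ n-1`, `s_i` exchanges the
values `i ↔ i+1` and `-i ↔ -(i+1)`;  `s_n` exchanges the values `n-1 ↔ -n` and `n ↔ -(n-1)`. -/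
def sgen (n i : ℕ) : Perm ℤ :=
  if i = n then Equiv.swap ((n : ℤ) - 1) (-(n : ℤ)) * Equiv.swap (n : ℤ) (-((n : ℤ) - 1))
  else Equiv.swap (i : ℤ) ((i : ℤ) + 1) * Equiv.swap (-(i : ℤ)) (-((i : ℤ) + 1))

/-- The product `s_{l₁} s_{l₂} ⋯ s_{l_k}` of the word `l = [l₁, …, l_k]`. -/
def wordProd (n : ℕ) (l : List ℕ) : Perm ℤ := (l.map (sgen n)).prod

/-- The Coxeter length of `w ∈ D_n`: the least length of a word in `s_1, …, s_n` whose
product is `w`. -/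
noncomputable def DLength (n : ℕ) (w : Perm ℤ) : ℕ :=
  sInf {k | ∃ l : List ℕ, (∀ i ∈ l, 1 ≤ i ∧ i ≤ n) ∧ l.length = k ∧ wordProd n l = w}

/-- `dem` is the Demazure product of the Coxeter group `D_n`: the (unique) associative
product on `D_n`, with identity `id`, such that for each simple generator `s` and `u ∈ D_n`,
`s ⋆ u = s·u` if `ℓ(s·u) > ℓ(u)`, and `s ⋆ u = u` if `ℓ(s·u) < ℓ(u)`. -/
def IsDemazure (n : ℕ) (dem : Perm ℤ → Perm ℤ → Perm ℤ) : Prop :=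
  (∀ u v, IsEvenSignedPerm n u → IsEvenSignedPerm n v → IsEvenSignedPerm n (dem u v)) ∧
  (∀ u v w, IsEvenSignedPerm n u → IsEvenSignedPerm n v → IsEvenSignedPerm n w →
      dem (dem u v) w = dem u (dem v w)) ∧
  (∀ u, IsEvenSignedPerm n u → dem 1 u = u ∧ dem u 1 = u) ∧
  (∀ i, 1 ≤ i → i ≤ n → ∀ u, IsEvenSignedPerm n u →
      (DLength n u < DLength n (sgen n i * u) → dem (sgen n i) u = sgen n i * u) ∧
      (DLength n (sgen n i * u) < DLength n u → dem (sgen n i) u = u))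

/-- The swap performed in one step of the hopping procedure: exchange the values `t ↔ q`
and simultaneously `-t ↔ -q` (unless `t = -q`). -/
def hswap (t q : ℤ) : Perm ℤ :=
  if t = -q then Equiv.swap t q else Equiv.swap t q * Equiv.swap (-t) (-q)

/-- `q` is eligible for hopping `t` in `w`: `q ∈ ±[n]`, `q > t` in the order on `±[n]`,
and `q` occurs strictly to the right of `t` in the unfolding of `w`. -/
def HopStep (n : ℕ) (w : Perm ℤ) (t q : ℤ) : Prop :=
  inPM n q ∧ dlt n t q ∧ dkey n (w⁻¹ t) < dkey n (w⁻¹ q) ∧ dkey n (w⁻¹ q) ≤ 2 * n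

instance (n : ℕ) (w : Perm ℤ) (t q : ℤ) : Decidable (HopStep n w t q) :=
  inferInstanceAs (Decidable
    (inPM n q ∧ dlt n t q ∧ dkey n (w⁻¹ t) < dkey n (w⁻¹ q) ∧ dkey n (w⁻¹ q) ≤ 2 * n))

theorem hop_measure (n : ℕ) (w : Perm ℤ) (t q : ℤ) (h : HopStep n w t q) :
    (2 * (n : ℤ) + 1 - dkey n ((hswap t q * w)⁻¹ t)).toNat
      < (2 * (n : ℤ) + 1 - dkey n (w⁻¹ t)).toNat := by
  obtain ⟨⟨hq0, _⟩, _, hlt, hle⟩ := h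
  have key : (hswap t q * w)⁻¹ t = w⁻¹ q := by
    have hs : (hswap t q)⁻¹ t = q := by
      unfold hswap
      split_ifs with he
      · subst he
        simp [Equiv.swap_inv, Equiv.swap_apply_left]
      · have h1 : q ≠ -t := fun hc => he (by omega)
        have h2 : q ≠ -q := fun hc => hq0 (by omega)
        simp [mul_inv_rev, Equiv.swap_inv, Equiv.Perm.mul_apply, Equiv.swap_apply_left,
          Equiv.swap_apply_of_ne_of_ne h1 h2]
    rw [mul_inv_rev, Equiv.Perm.mul_apply, hs]
  rw [key]
  omega

/-- The hopping operator `h_{t,L}`: repeatedly pick the element `q` of `L`, occurring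
latest in `L`, among those greater than `t` occurring strictly to the right of `t` in
the unfolding of `w`; swap the values `t ↔ q` (and `-t ↔ -q`, unless `t = -q`); stop
when no such `q` exists. -/
def hop (n : ℕ) (t : ℤ) (L : List ℤ) (w : Perm ℤ) : Perm ℤ :=
  match h : L.reverse.find? (fun q => decide (HopStep n w t q)) with
  | none => w
  | some q => hop n t L (hswap t q * w)
termination_by (2 * (n : ℤ) + 1 - dkey n (w⁻¹ t)).toNat
decreasing_by
  have hq := List.find?_some h
  simp only [decide_eq_true_eq] at hq
  exact hop_measure n w t q hq

/-- The unfolding `[w(1), …, w(n), -w(n), …, -w(1)]` of a signed permutation `w`. -/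
def unfoldList (n : ℕ) (w : Perm ℤ) : List ℤ :=
  (List.range (2 * n)).map fun p => w (ofKey n ((p : ℤ) + 1))

/-- `w ↖ t`: the ordered list of entries of the unfolding of `w` occurring strictly to the
left of the value `t` and lying strictly between `t` and `-t` in the order on `±[n]`. -/
def liftD (n : ℕ) (w : Perm ℤ) (t : ℤ) : List ℤ :=
  ((unfoldList n w).take (dkey n (w⁻¹ t) - 1).toNat).filter
    fun a => decide (dlt n t a ∧ dlt n a (-t))

/-- `L ∼ₜ L'` : the hopping operators `h_{t,L}` and `h_{t,L'}` agree on all of `D_n`. -/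
def HopEquiv (n : ℕ) (t : ℤ) (L L' : List ℤ) : Prop :=
  ∀ u : Perm ℤ, IsEvenSignedPerm n u → hop n t L u = hop n t L' u

/-- The list `[a, a+1, …, b]` (as integers). -/
def listUp (a b : ℕ) : List ℤ := (List.range (b + 1 - a)).map fun k => (a : ℤ) + k

/-- The list `[-b, -(b-1), …, -a]` (as integers). -/
def listNegUp (a b : ℕ) : List ℤ := (List.range (b + 1 - a)).map fun k => -(b : ℤ) + k

/-- For `1 ≤ i ≤ n-2` : `Q` is one of the minimal coset representatives
(form 0: `id`; form 1: `s_i ⋯ s_j`; form 2: `s_i ⋯ s_{n-2} s_n s_{n-1} ⋯ s_j`;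
form 3: `s_i ⋯ s_{n-2} s_n`). -/
def QForm (n i : ℕ) (Q : Perm ℤ) : Prop :=
  Q = 1 ∨
  (∃ j, i ≤ j ∧ j ≤ n - 1 ∧ Q = wordProd n (List.range' i (j + 1 - i))) ∨
  (∃ j, i ≤ j ∧ j ≤ n - 1 ∧
    Q = wordProd n (List.range' i (n - 1 - i) ++ [n] ++ (List.range' j (n - j)).reverse)) ∨
  Q = wordProd n (List.range' i (n - 1 - i) ++ [n])

/-- `Q` is one of the four elements `id`, `s_{n-1}`, `s_n s_{n-1}`, `s_n` of
`W_{{s_{n-1}, s_n}}`. -/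
def QFormTop (n : ℕ) (Q : Perm ℤ) : Prop :=
  Q = 1 ∨ Q = sgen n (n - 1) ∨ Q = sgen n n * sgen n (n - 1) ∨ Q = sgen n n

/-- For `1 ≤ i ≤ n-2`: `(Q, L)` is a factor of a parabolic factorization together with
its associated list `L_i`. -/
def QList (n i : ℕ) (Q : Perm ℤ) (L : List ℤ) : Prop :=
  (Q = 1 ∧ L = []) ∨
  (∃ j, i ≤ j ∧ j ≤ n - 1 ∧ Q = wordProd n (List.range' i (j + 1 - i)) ∧
    L = listUp (i + 1) (j + 1)) ∨
  (∃ j, i ≤ j ∧ j ≤ n - 1 ∧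
    Q = wordProd n (List.range' i (n - 1 - i) ++ [n] ++ (List.range' j (n - j)).reverse) ∧
    L = listUp (i + 1) n ++ listNegUp (j + 1) n) ∨
  (Q = wordProd n (List.range' i (n - 1 - i) ++ [n]) ∧
    L = listUp (i + 1) (n - 1) ++ [-(n : ℤ)])

/-- `(Q, L)` is the top factor `Q_{n-1}` of a parabolic factorization together with its
associated list `L_{n-1}`. -/
def QListTop (n : ℕ) (Q : Perm ℤ) (L : List ℤ) : Prop :=
  (Q = 1 ∧ L = []) ∨ (Q = sgen n (n - 1) ∧ L = [(n : ℤ)]) ∨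
  (Q = sgen n n * sgen n (n - 1) ∧ L = [(n : ℤ), -(n : ℤ)]) ∨
  (Q = sgen n n ∧ L = [-(n : ℤ)])

/-- The partial product `Q_{n-1} Q_{n-2} ⋯ Q_k` of a parabolic factorization. -/
def prodQ (n : ℕ) (Q : ℕ → Perm ℤ) (k : ℕ) : Perm ℤ :=
  (((List.range' k (n - k)).reverse).map Q).prod

/-- The letterwise extended Demazure action of the generator `s_i` (for `1 ≤ i ≤ n-1`) on an
arbitrary signed permutation: `s_i ⋆ u = s_i·u` if the value `i` occurs strictly to the left
of the value `i+1` in the unfolding of `u`, and `u` otherwise. -/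
def demStep (n i : ℕ) (u : Perm ℤ) : Perm ℤ :=
  if dkey n (u⁻¹ (i : ℤ)) < dkey n (u⁻¹ ((i : ℤ) + 1)) then sgen n i * u else u

/-- The letterwise extended Demazure action of a word:
`(s_{a₁} ⋯ s_{a_k}) ⋆ u = s_{a₁} ⋆ (s_{a₂} ⋆ (⋯ (s_{a_k} ⋆ u)))`. -/
def demWord (n : ℕ) (l : List ℕ) (u : Perm ℤ) : Perm ℤ := l.foldr (demStep n) u

/-- A member of the symmetric group on `±[n]`, viewed as a permutation of `ℤ`:
it fixes `0` and everything of absolute value `> n`. -/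
def IsPermPM (n : ℕ) (w : Perm ℤ) : Prop := ∀ a : ℤ, a = 0 ∨ (n : ℤ) < |a| → w a = a

/-- The simple generators of the symmetric group on `±[n]` (type `A_{2n-1}`):
`agen n k` (for `1 ≤ k ≤ 2n-1`) transposes the order-adjacent elements of `±[n]`
with keys `k` and `k+1`. -/
def agen (n k : ℕ) : Perm ℤ := Equiv.swap (ofKey n (k : ℤ)) (ofKey n ((k : ℤ) + 1))

/-- The Coxeter length of an element of the symmetric group on `±[n]`. -/
noncomputable def ALength (n : ℕ) (w : Perm ℤ) : ℕ :=
  sInf {k | ∃ l : List ℕ, (∀ i ∈ l, 1 ≤ i ∧ i ≤ 2 * n - 1) ∧ l.length = k ∧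
    (l.map (agen n)).prod = w}

/-- `dem` is the Demazure product of the symmetric group on `±[n]`, viewed as a Coxeter
group of type `A_{2n-1}` with simple generators the transpositions of order-adjacent
elements of `±[n]`. -/
def IsDemazureA (n : ℕ) (dem : Perm ℤ → Perm ℤ → Perm ℤ) : Prop :=
  (∀ u v, IsPermPM n u → IsPermPM n v → IsPermPM n (dem u v)) ∧
  (∀ u v w, IsPermPM n u → IsPermPM n v → IsPermPM n w →
      dem (dem u v) w = dem u (dem v w)) ∧
  (∀ u, IsPermPM n u → dem 1 u = u ∧ dem u 1 = u) ∧
  (∀ k, 1 ≤ k → k ≤ 2 * n - 1 → ∀ u, IsPermPM n u →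
      (ALength n u < ALength n (agen n k * u) → dem (agen n k) u = agen n k * u) ∧
      (ALength n (agen n k * u) < ALength n u → dem (agen n k) u = u))

/-! Write `dkey n (w⁻¹ x)` for the position of the value `x` in the unfolding of `w`.
The two lists differ only in the order of `a, -a`, so both procedures choose the same `q` at
every step unless no entry of `L'` is eligible while both `a` and `-a` are. In that case
`[L, a, -a, L']` hops `t` over `-a` and then over `a`, and `[L, -a, a, L']` over `a` and then
over `-a`: after the first hop `t` sits where `±a` was, so the other one of `±a` is still to its
right, the one just passed is not, and no entry of `L'` has become eligible. The two swaps
commute (both lie in the Klein four-group acting on `{±t, ±a}`), so both procedures reach the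
same signed permutation, and induction on the position of `t` concludes. -/

section SignedPerm

variable {n : ℕ}

lemma inPM_of_dkey_le {a : ℤ} (h : dkey n a ≤ 2 * n) : inPM n a := by
  refine ⟨?_, abs_le.mpr ?_⟩ <;> unfold dkey at h <;> split_ifs at h <;> omega

lemma dkey_mem_Icc {a : ℤ} (h : inPM n a) : 1 ≤ dkey n a ∧ dkey n a ≤ 2 * n := by
  obtain ⟨h0, h1⟩ := h
  rw [abs_le] at h1
  unfold dkey; split_ifs <;> omega

lemma dkey_neg {a : ℤ} (h : inPM n a) : dkey n (-a) = 2 * n + 1 - dkey n a := by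
  obtain ⟨h0, h1⟩ := h
  rw [abs_le] at h1
  unfold dkey; split_ifs <;> omega

lemma IsSignedPerm.mul {v u : Perm ℤ} (hv : IsSignedPerm n v) (hu : IsSignedPerm n u) :
    IsSignedPerm n (v * u) :=
  ⟨fun a => by simp only [Perm.mul_apply, hu.1, hv.1],
    fun a ha => by simp only [Perm.mul_apply, hu.2 a ha, hv.2 a ha]⟩

lemma IsSignedPerm.inv_apply_neg {u : Perm ℤ} (hu : IsSignedPerm n u) (a : ℤ) :
    u⁻¹ (-a) = -(u⁻¹ a) := by
  rw [Perm.inv_eq_iff_eq, hu.1]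
  exact congrArg Neg.neg (u.apply_symm_apply a).symm

lemma IsSignedPerm.inPM_inv_apply {u : Perm ℤ} (hu : IsSignedPerm n u) {a : ℤ}
    (ha : inPM n a) : inPM n (u⁻¹ a) := by
  by_contra hb
  have hfix : u (u⁻¹ a) = u⁻¹ a := by
    rcases eq_or_ne (u⁻¹ a) 0 with h0 | h0
    · have := hu.1 0
      rw [neg_zero] at this
      rw [h0]; omega
    · exact hu.2 _ (not_le.mp fun hle => hb ⟨h0, hle⟩)
  rw [show u (u⁻¹ a) = a from u.apply_symm_apply a] at hfix
  exact hb (hfix ▸ ha)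

lemma IsSignedPerm.dkey_inv_apply_neg {u : Perm ℤ} (hu : IsSignedPerm n u) {a : ℤ}
    (ha : inPM n a) : dkey n (u⁻¹ (-a)) = 2 * n + 1 - dkey n (u⁻¹ a) := by
  rw [hu.inv_apply_neg, dkey_neg (hu.inPM_inv_apply ha)]

end SignedPerm

section HSwap

lemma hswap_apply {t q : ℤ} (ht : t ≠ 0) (hq : q ≠ 0) (a : ℤ) :
    hswap t q a = if a = t then q else if a = q then t
      else if a = -t then -q else if a = -q then -t else a := by
  unfold hswap
  split_ifs <;> simp only [Perm.mul_apply, swap_apply_def] <;> split_ifs <;> omega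

lemma hswap_inv {t q : ℤ} (ht : t ≠ 0) (hq : q ≠ 0) : (hswap t q)⁻¹ = hswap t q := by
  refine inv_eq_of_mul_eq_one_right (Perm.ext fun a => ?_)
  simp only [Perm.mul_apply, Perm.one_apply, hswap_apply ht hq]
  split_ifs <;> omega

lemma hswap_mul_inv_apply {t q : ℤ} (ht : t ≠ 0) (hq : q ≠ 0) (u : Perm ℤ) (x : ℤ) :
    (hswap t q * u)⁻¹ x = u⁻¹ (hswap t q x) := by
  rw [mul_inv_rev, Perm.mul_apply, hswap_inv ht hq]

lemma isSignedPerm_hswap {n : ℕ} {t q : ℤ} (ht : inPM n t) (hq : inPM n q) :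
    IsSignedPerm n (hswap t q) := by
  obtain ⟨ht0, ht1⟩ := ht
  obtain ⟨hq0, hq1⟩ := hq
  rw [abs_le] at ht1 hq1
  refine ⟨fun a => ?_, fun a ha => ?_⟩
  · rw [hswap_apply ht0 hq0, hswap_apply ht0 hq0]
    split_ifs <;> omega
  · have := lt_abs.mp ha
    rw [hswap_apply ht0 hq0]
    split_ifs <;> omega

lemma hswap_apply_left {t q : ℤ} (ht : t ≠ 0) (hq : q ≠ 0) : hswap t q t = q := by
  rw [hswap_apply ht hq, if_pos rfl]

lemma hswap_apply_right {t q : ℤ} (ht : t ≠ 0) (hq : q ≠ 0) : hswap t q q = t := by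
  rw [hswap_apply ht hq]; split_ifs <;> omega

lemma hswap_apply_neg_left {t q : ℤ} (ht : t ≠ 0) (hq : q ≠ 0) : hswap t q (-t) = -q := by
  rw [hswap_apply ht hq]; split_ifs <;> omega

lemma hswap_apply_neg_right {t q : ℤ} (ht : t ≠ 0) (hq : q ≠ 0) : hswap t q (-q) = -t := by
  rw [hswap_apply ht hq]; split_ifs <;> omega

lemma hswap_apply_of_ne {t q x : ℤ} (ht : t ≠ 0) (hq : q ≠ 0) (h₁ : x ≠ t) (h₂ : x ≠ q)
    (h₃ : x ≠ -t) (h₄ : x ≠ -q) : hswap t q x = x := by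
  rw [hswap_apply ht hq, if_neg h₁, if_neg h₂, if_neg h₃, if_neg h₄]

lemma hswap_mul_hswap_neg_comm {t a : ℤ} (ht : t ≠ 0) (ha : a ≠ 0) :
    hswap t a * hswap t (-a) = hswap t (-a) * hswap t a := by
  have hna : -a ≠ 0 := neg_ne_zero.mpr ha
  have hneg := hswap_apply_neg_right ht hna
  rw [neg_neg] at hneg
  ext x
  simp only [Perm.mul_apply]
  by_cases hx : x = t ∨ x = -t ∨ x = a ∨ x = -a
  · rcases hx with rfl | rfl | rfl | rfl <;>
      simp only [hswap_apply_left, hswap_apply_right, hswap_apply_neg_left,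
        hswap_apply_neg_right, hneg, neg_neg, ht, ha, hna, ne_eq, not_false_eq_true]
  · simp only [not_or] at hx
    obtain ⟨h₁, h₂, h₃, h₄⟩ := hx
    simp only [hswap_apply_of_ne ht ha h₁ h₃ h₂ h₄,
      hswap_apply_of_ne ht hna h₁ h₄ h₂ (by rwa [neg_neg])]

end HSwap

lemma List.find?_reverse_append_pair_comm {α : Type*} {p : α → Bool} (l₁ l₂ : List α)
    {a b : α} (h : l₂.reverse.find? p = none → ¬(p a ∧ p b)) :
    (l₁ ++ [a, b] ++ l₂).reverse.find? p = (l₁ ++ [b, a] ++ l₂).reverse.find? p := by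
  cases h₂ : l₂.reverse.find? p <;> cases ha : p a <;> cases hb : p b <;>
    simp_all [List.find?_append]

section Hop

variable {n : ℕ} {t : ℤ}

lemma hop_of_find?_eq_none {L : List ℤ} {w : Perm ℤ}
    (h : L.reverse.find? (fun q => decide (HopStep n w t q)) = none) : hop n t L w = w := by
  rw [hop]
  split
  · rfl
  · rename_i q hq
    rw [h] at hq
    cases hq

lemma hop_of_find?_eq_some {L : List ℤ} {w : Perm ℤ} {q : ℤ}
    (h : L.reverse.find? (fun q => decide (HopStep n w t q)) = some q) :
    hop n t L w = hop n t L (hswap t q * w) := by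
  rw [hop]
  split
  · rename_i hq
    rw [h] at hq
    cases hq
  · rename_i q' hq
    rw [h] at hq
    cases hq
    rfl

lemma HopStep.inPM_left {w : Perm ℤ} {q : ℤ} (h : HopStep n w t q) : inPM n t := by
  have := dkey_mem_Icc h.1
  have := h.2.1
  unfold dlt at this
  exact inPM_of_dkey_le (by omega)

lemma HopStep.isSignedPerm_hswap_mul {w : Perm ℤ} {q : ℤ} (h : HopStep n w t q)
    (hw : IsSignedPerm n w) : IsSignedPerm n (hswap t q * w) :=
  (isSignedPerm_hswap h.inPM_left h.1).mul hw

variable {u : Perm ℤ} {a : ℤ}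

lemma not_hopStep_hswap_mul_self (ha : HopStep n u t a) : ¬HopStep n (hswap t a * u) t a := by
  rintro ⟨-, -, hpos, -⟩
  have ht0 := ha.inPM_left.1
  rw [hswap_mul_inv_apply ht0 ha.1.1, hswap_mul_inv_apply ht0 ha.1.1, hswap_apply_left ht0 ha.1.1,
    hswap_apply_right ht0 ha.1.1] at hpos
  exact absurd ha.2.2.1 (not_lt.mpr hpos.le)

lemma hopStep_hswap_mul_neg (hu : IsSignedPerm n u) (ha : HopStep n u t a)
    (hna : HopStep n u t (-a)) : HopStep n (hswap t a * u) t (-a) := by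
  have ht := ha.inPM_left
  have hpa := hna.2.2.1
  have := dkey_mem_Icc (hu.inPM_inv_apply ht)
  rw [hu.dkey_inv_apply_neg ha.1] at hpa
  refine ⟨hna.1, hna.2.1, ?_, ?_⟩ <;>
    simp only [hswap_mul_inv_apply ht.1 ha.1.1, hswap_apply_left ht.1 ha.1.1,
      hswap_apply_neg_right ht.1 ha.1.1, hu.dkey_inv_apply_neg ht] <;>
    omega

lemma hopStep_of_hswap_mul (hu : IsSignedPerm n u) (ha : HopStep n u t a)
    (hna : HopStep n u t (-a)) {q : ℤ} (hqa : q ≠ a) (hqna : q ≠ -a)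
    (h : HopStep n (hswap t a * u) t q) : HopStep n u t q := by
  obtain ⟨hq, hlt, hpos, hle⟩ := h
  have ht := ha.inPM_left
  have hta := ha.2.2.1
  have htna := hna.2.2.1
  have := dkey_mem_Icc (hu.inPM_inv_apply ht)
  rw [hu.dkey_inv_apply_neg ha.1] at htna
  simp only [hswap_mul_inv_apply ht.1 ha.1.1, hswap_apply_left ht.1 ha.1.1] at hpos hle
  by_cases hqt : q = -t
  · subst hqt
    rw [hswap_apply_neg_left ht.1 ha.1.1, hu.dkey_inv_apply_neg ha.1] at hpos
    refine ⟨hq, hlt, ?_, ?_⟩ <;> rw [hu.dkey_inv_apply_neg ht] <;> omega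
  · have hqt' : q ≠ t := by
      rintro rfl
      exact lt_irrefl _ hlt
    rw [hswap_apply_of_ne ht.1 ha.1.1 hqt' hqa hqt hqna] at hpos hle
    exact ⟨hq, hlt, by omega, hle⟩

lemma hop_append_pair_neg_eq_hop_hswap_hswap (hu : IsSignedPerm n u) (ha : HopStep n u t a)
    (hna : HopStep n u t (-a)) (L L' : List ℤ) (hL' : ∀ q ∈ L', ¬HopStep n u t q) :
    hop n t (L ++ [a, -a] ++ L') u
      = hop n t (L ++ [a, -a] ++ L') (hswap t a * (hswap t (-a) * u)) := by
  have hnna : HopStep n u t (-(-a)) := by rwa [neg_neg]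
  have hL'w : ∀ q ∈ L', ¬HopStep n (hswap t (-a) * u) t q := fun q hq hw =>
    hL' q hq (hopStep_of_hswap_mul hu hna hnna (fun h => hL' q hq (h ▸ hna))
      (fun h => hL' q hq (h ▸ hnna)) hw)
  have hw : HopStep n (hswap t (-a) * u) t a := by
    simpa only [neg_neg] using hopStep_hswap_mul_neg hu hna hnna
  have hnone : ∀ w : Perm ℤ, (∀ q ∈ L', ¬HopStep n w t q) →
      L'.reverse.find? (fun q => decide (HopStep n w t q)) = none := fun w hw =>
    List.find?_eq_none.mpr (by simpa using hw)
  rw [hop_of_find?_eq_some (q := -a), hop_of_find?_eq_some (q := a)] <;>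
    simp [List.find?_append, hnone _ hL', hnone _ hL'w, hna, hw,
      not_hopStep_hswap_mul_self hna]

theorem hop_append_pair_neg_comm (L L' : List ℤ) (hu : IsSignedPerm n u) :
    hop n t (L ++ [a, -a] ++ L') u = hop n t (L ++ [-a, a] ++ L') u := by
  induction hm : (2 * (n : ℤ) + 1 - dkey n (u⁻¹ t)).toNat using Nat.strong_induction_on
    generalizing u with
  | _ m ih =>
  subst hm
  by_cases hboth : HopStep n u t a ∧ HopStep n u t (-a) ∧ ∀ q ∈ L', ¬HopStep n u t q
  · obtain ⟨ha, hna, hL'⟩ := hboth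
    have hnna : HopStep n u t (-(-a)) := by rwa [neg_neg]
    have hw : HopStep n (hswap t (-a) * u) t a := by
      simpa only [neg_neg] using hopStep_hswap_mul_neg hu hna hnna
    have h₂ := hop_append_pair_neg_eq_hop_hswap_hswap hu hna hnna L L' hL'
    rw [neg_neg] at h₂
    rw [hop_append_pair_neg_eq_hop_hswap_hswap hu ha hna L L' hL', h₂,
      ← mul_assoc (hswap t (-a)), ← hswap_mul_hswap_neg_comm ha.inPM_left.1 ha.1.1, mul_assoc]
    exact ih _ ((hop_measure n _ t a hw).trans (hop_measure n u t (-a) hna))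
      (hw.isSignedPerm_hswap_mul (hna.isSignedPerm_hswap_mul hu)) rfl
  · have hfind := List.find?_reverse_append_pair_comm (p := fun q => decide (HopStep n u t q))
      L L' (a := a) (b := -a) fun hnone ⟨ha, hna⟩ =>
        hboth ⟨by simpa using ha, by simpa using hna, by simpa [List.find?_eq_none] using hnone⟩
    rcases hq : (L ++ [a, -a] ++ L').reverse.find? (fun q => decide (HopStep n u t q)) with _ | q
    · rw [hop_of_find?_eq_none hq, hop_of_find?_eq_none (hfind ▸ hq)]
    · rw [hop_of_find?_eq_some hq, hop_of_find?_eq_some (L := L ++ [-a, a] ++ L') (hfind ▸ hq)]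
      have hstep : HopStep n u t q := by simpa using List.find?_some hq
      exact ih _ (hop_measure n u t q hstep) (hstep.isSignedPerm_hswap_mul hu) rfl

end Hop

theorem hop_swap_adjacent_negpair_general (n : ℕ) (i j : ℕ) (L L' : List ℤ)
    (u : Perm ℤ) (hu : IsSignedPerm n u) :
    hop n (i : ℤ) (L ++ [(j : ℤ), -(j : ℤ)] ++ L') u
      = hop n (i : ℤ) (L ++ [-(j : ℤ), (j : ℤ)] ++ L') u :=
  hop_append_pair_neg_comm L L' hu

/-- if `1 ≤ i < j ≤ n` then `h_{i,[L,j,-j,L']} = h_{i,[L,-j,j,L']}`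
on every signed permutation. -/
theorem hop_swap_adjacent_negpair (n : ℕ) (hn : 2 ≤ n) (i j : ℕ)
    (hi : 1 ≤ i) (hij : i < j) (hj : j ≤ n) (L L' : List ℤ)
    (hnd : (L ++ [(j : ℤ), -(j : ℤ)] ++ L').Nodup)
    (hmem : ∀ a ∈ L ++ [(j : ℤ), -(j : ℤ)] ++ L', inPM n a)
    (u : Perm ℤ) (hu : IsSignedPerm n u) :
    hop n (i : ℤ) (L ++ [(j : ℤ), -(j : ℤ)] ++ L') u
      = hop n (i : ℤ) (L ++ [-(j : ℤ), (j : ℤ)] ++ L') u :=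
  hop_swap_adjacent_negpair_general n i j L L' u hu
end

section
/- For every 1 ≤ i ≤ n−1 and every w ∈ D_n, the Demazure product of the simple generator s_i with w satisfies s_i ⋆ w = h_{i, [i+1]}(s_i·w), where s_i·w is the ordinary product and [i+1] is the one-element list. -/
open Equiv

/-!
The Coxeter length of `w ∈ D_n` is the number of positive roots `e_a ± e_b` (`a < b`) that
`w⁻¹` sends to negative roots: a simple reflection `s_i` negates its simple root `α_i` and
permutes the other positive roots, so multiplying by `s_i` changes this count by exactly one,
and an even signed permutation without descents is the identity. For `i < n`, `α_i = e_i - e_{i+1}`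
is such a root exactly when the value `i + 1` precedes `i` in the unfolding of `w`.

So if `i` precedes `i + 1`, then `s_i ⋆ w = s_i w`, in which `i + 1` precedes `i` and no hop is
possible. Otherwise `s_i ⋆ w = w`, and the single hop of `i` over `i + 1` in `s_i w` is
multiplication by `s_i`, which returns `w`, where no further hop is possible.
-/

open Finset

theorem Finset.even_card_symmDiff_iff {α : Type*} [DecidableEq α] {s t : Finset α}
    (ht : Even t.card) : Even (symmDiff s t).card ↔ Even s.card := by
  have hsymm : #(symmDiff s t) = #(s \ t) + #(t \ s) := by
    rw [symmDiff_def, sup_eq_union, card_union_of_disjoint disjoint_sdiff_sdiff]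
  have hs := card_sdiff_add_card_inter s t
  have ht' := card_sdiff_add_card_inter t s
  rw [inter_comm] at ht'
  simp only [Nat.even_iff] at ht ⊢
  omega

theorem Int.eq_self_of_forall_lt_succ {n j : ℤ} {f : ℤ → ℤ}
    (hmono : ∀ k, 1 ≤ k → k < n → f k < f (k + 1))
    (hmaps : ∀ k, 1 ≤ k → k ≤ n → 1 ≤ f k ∧ f k ≤ n) (h1 : 1 ≤ j) (h2 : j ≤ n) :
    f j = j := by
  have hge : ∀ k, 1 ≤ k → k ≤ n → k ≤ f k := by
    intro k hk
    induction k, hk using Int.leInduction with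
    | base => exact fun h => (hmaps 1 le_rfl h).1
    | succ k hk ih =>
      intro h
      have := ih (by omega)
      have := hmono k hk (by omega)
      omega
  have hle : ∀ k ≤ n, 1 ≤ k → f k ≤ k := by
    intro k hk
    induction k, hk using Int.leInductionDown with
    | base => exact fun h => (hmaps n h le_rfl).2
    | pred k hk ih =>
      intro h
      have := ih (by omega)
      have := hmono (k - 1) h (by omega)
      rw [sub_add_cancel] at this
      omega
  exact le_antisymm (hle j h2 h1) (hge j h1 h2)

namespace IsSignedPerm

variable {n : ℕ} {u w : Perm ℤ}

protected theorem inv (hw : IsSignedPerm n w) : IsSignedPerm n w⁻¹ := by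
  refine ⟨fun a => w.injective ?_, fun a ha => ?_⟩
  · simp only [Perm.coe_inv, apply_symm_apply, hw.1]
  · rw [Perm.inv_eq_iff_eq, hw.2 a ha]

protected theorem mul_s6 (hu : IsSignedPerm n u) (hw : IsSignedPerm n w) :
    IsSignedPerm n (u * w) :=
  ⟨fun a => by simp only [Perm.mul_apply, hw.1, hu.1],
    fun a ha => by simp only [Perm.mul_apply, hw.2 a ha, hu.2 a ha]⟩

protected theorem one : IsSignedPerm n 1 := ⟨fun _ => rfl, fun _ _ => rfl⟩

theorem map_zero (hw : IsSignedPerm n w) : w 0 = 0 := by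
  have := hw.1 0
  rw [neg_zero] at this
  omega

theorem inPM_apply (hw : IsSignedPerm n w) {a : ℤ} (ha : inPM n a) : inPM n (w a) := by
  refine ⟨fun h => ha.1 (w.injective (h.trans hw.map_zero.symm)), ?_⟩
  by_contra! h
  have := w.injective (hw.2 (w a) h)
  rw [this] at h
  exact absurd ha.2 (not_le.2 h)

theorem inPM_inv_apply_s6 (hw : IsSignedPerm n w) {j : ℤ} (h1 : 1 ≤ j)
    (h2 : j ≤ n) : inPM n (w⁻¹ j) :=
  hw.inv.inPM_apply ⟨by omega, by rw [abs_of_pos] <;> omega⟩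

theorem abs_apply_ne (hw : IsSignedPerm n w) {a b : ℤ} (h : |a| ≠ |b|) : |w a| ≠ |w b| := by
  intro hab
  rcases abs_eq_abs.1 hab with hab | hab
  · exact h (by rw [w.injective hab])
  · rw [← hw.1] at hab
    exact h (by rw [w.injective hab, abs_neg])

theorem abs_apply_eq_abs_iff (hw : IsSignedPerm n w) {p a : ℤ} :
    |w p| = |a| ↔ |p| = |w⁻¹ a| := by
  rw [abs_eq_abs, abs_eq_abs, ← hw.inv.1, Perm.eq_inv_iff_eq, Perm.eq_inv_iff_eq]

theorem filter_abs_apply_eq (hw : IsSignedPerm n w) {a : ℤ} (ha : 1 ≤ a) (han : a ≤ n) :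
    (Icc 1 (n : ℤ)).filter (fun p => |w p| = a) = {|w⁻¹ a|} := by
  obtain ⟨hb0, hbn⟩ := hw.inPM_inv_apply_s6 ha han
  ext p
  simp only [mem_filter, mem_Icc, mem_singleton]
  constructor
  · rintro ⟨⟨hp, -⟩, h⟩
    rwa [← abs_of_pos (by omega : 0 < a), hw.abs_apply_eq_abs_iff, abs_of_pos hp] at h
  · rintro rfl
    have := abs_pos.2 hb0
    refine ⟨⟨by omega, hbn⟩, ?_⟩
    rw [← abs_of_pos (by omega : 0 < a), hw.abs_apply_eq_abs_iff, abs_abs,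
      abs_of_pos (by omega : 0 < a)]

theorem eq_one_of_forall (hw : IsSignedPerm n w)
    (h : ∀ a : ℤ, 1 ≤ a → a ≤ n → w a = a) : w = 1 := by
  ext a
  rw [Perm.one_apply]
  rcases lt_trichotomy a 0 with ha | rfl | ha
  · by_cases han : -(n : ℤ) ≤ a
    · rw [← neg_neg a, hw.1, h (-a) (by omega) (by omega)]
    · exact hw.2 a (by rw [abs_of_neg ha]; omega)
  · exact hw.map_zero
  · by_cases han : a ≤ (n : ℤ)
    · exact h a (by omega) han
    · exact hw.2 a (by rw [abs_of_pos ha]; omega)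

end IsSignedPerm

theorem IsEvenSignedPerm.inv {n : ℕ} {w : Perm ℤ} (hw : IsEvenSignedPerm n w) :
    IsEvenSignedPerm n w⁻¹ := by
  refine ⟨hw.1.inv, ?_⟩
  convert hw.2 using 1
  have hrange : ∀ {v : Perm ℤ}, IsSignedPerm n v → ∀ j : ℤ, 1 ≤ j → j ≤ n →
      -(n : ℤ) ≤ v j ∧ v j ≤ n := fun hv j h1 h2 =>
    abs_le.1 (hv.inPM_apply ⟨by omega, by rw [abs_of_pos] <;> omega⟩).2
  have hw' : ∀ p, w (-p) = -(w p) := hw.1.1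
  have hwinv' : ∀ j, w.symm (-j) = -(w.symm j) := hw.1.inv.1
  refine card_nbij' (fun j => -(w⁻¹ j)) (fun p => -(w p)) (fun j hj => ?_) (fun p hp => ?_)
    (fun j _ => ?_) (fun p _ => ?_) <;>
    simp only [coe_filter, Set.mem_ofPred_eq, mem_Icc, hw', hwinv', neg_neg, Perm.coe_inv,
      apply_symm_apply, symm_apply_apply] at *
  · have := hrange hw.1.inv j hj.1.1 hj.1.2
    simp only [Perm.coe_inv] at this
    omega
  · have := hrange hw.1 p hp.1.1 hp.1.2
    omega

theorem dkey_lt_iff {n : ℕ} {x y : ℤ} (hx : inPM n x) (hy : inPM n y) :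
    dkey n x < dkey n y ↔
      (0 < x ∧ 0 < y ∧ x < y) ∨ (x < 0 ∧ y < 0 ∧ x < y) ∨ (0 < x ∧ y < 0) := by
  obtain ⟨hx0, hxn⟩ := hx
  obtain ⟨hy0, hyn⟩ := hy
  unfold dkey
  rw [abs_le] at hxn hyn
  split_ifs <;> omega

theorem dkey_le {n : ℕ} {x : ℤ} (hx : inPM n x) : dkey n x ≤ 2 * n := by
  obtain ⟨hx0, hxn⟩ := hx
  unfold dkey
  rw [abs_le] at hxn
  split_ifs <;> omega

theorem dkey_injOn {n : ℕ} {x y : ℤ} (hx : inPM n x) (hy : inPM n y)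
    (h : dkey n x = dkey n y) : x = y := by
  obtain ⟨hx0, hxn⟩ := hx
  obtain ⟨hy0, hyn⟩ := hy
  unfold dkey at h
  rw [abs_le] at hxn hyn
  split_ifs at h <;> omega

section Generators

variable {n i : ℕ}

theorem sgen_apply_of_ne (hi : 1 ≤ i) (hin : i ≠ n) (x : ℤ) :
    sgen n i x = if x = (i : ℤ) then (i : ℤ) + 1 else if x = (i : ℤ) + 1 then (i : ℤ)
      else if x = -(i : ℤ) then -((i : ℤ) + 1) else if x = -((i : ℤ) + 1) then -(i : ℤ)
      else x := by
  rw [sgen, if_neg hin]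
  simp only [Perm.mul_apply, swap_apply_def]
  split_ifs <;> omega

theorem sgen_self_apply (hn : 2 ≤ n) (x : ℤ) :
    sgen n n x = if x = (n : ℤ) - 1 then -(n : ℤ) else if x = -(n : ℤ) then (n : ℤ) - 1
      else if x = (n : ℤ) then -((n : ℤ) - 1) else if x = -((n : ℤ) - 1) then (n : ℤ)
      else x := by
  rw [sgen, if_pos rfl]
  simp only [Perm.mul_apply, swap_apply_def]
  split_ifs <;> omega

theorem sgen_isSignedPerm (hn : 2 ≤ n) (hi : 1 ≤ i) (hin : i ≤ n) :
    IsSignedPerm n (sgen n i) := by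
  rcases eq_or_ne i n with rfl | hne
  · refine ⟨fun a => ?_, fun a ha => ?_⟩ <;>
      simp only [sgen_self_apply hn, Int.abs_eq_natAbs] at * <;> split_ifs <;> omega
  · refine ⟨fun a => ?_, fun a ha => ?_⟩ <;>
      simp only [sgen_apply_of_ne hi hne, Int.abs_eq_natAbs] at * <;> split_ifs <;> omega

theorem sgen_mul_self (hn : 2 ≤ n) (hi : 1 ≤ i) : sgen n i * sgen n i = 1 := by
  ext x
  simp only [Perm.mul_apply, Perm.one_apply]
  rcases eq_or_ne i n with rfl | hne
  · simp only [sgen_self_apply hn]; split_ifs <;> omega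
  · simp only [sgen_apply_of_ne hi hne]; split_ifs <;> omega

/-- `s_n` flips the signs of the entries `±(n-1)`, `±n` of the unfolding and nothing else,
and a signed permutation has exactly two such entries among its first `n`. -/
theorem IsEvenSignedPerm.sgen_self_mul (hn : 2 ≤ n) {w : Perm ℤ} (hw : IsEvenSignedPerm n w) :
    IsEvenSignedPerm n (sgen n n * w) := by
  refine ⟨(sgen_isSignedPerm hn (by omega) le_rfl).mul_s6 hw.1, ?_⟩
  have hD : Even ((Icc 1 (n : ℤ)).filter fun p => |w p| = n - 1 ∨ |w p| = n).card := by
    have hne : |w⁻¹ ((n : ℤ) - 1)| ≠ |w⁻¹ (n : ℤ)| :=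
      hw.1.inv.abs_apply_ne (by rw [abs_of_pos, abs_of_pos] <;> omega)
    rw [filter_or, hw.1.filter_abs_apply_eq (by omega) (by omega),
      hw.1.filter_abs_apply_eq (by omega) le_rfl, card_union_of_disjoint
        (disjoint_singleton.2 hne), card_singleton]
    exact even_two
  have hsymm : (Icc 1 (n : ℤ)).filter (fun p => (sgen n n * w) p < 0) =
      symmDiff ((Icc 1 (n : ℤ)).filter fun p => w p < 0)
        ((Icc 1 (n : ℤ)).filter fun p => |w p| = n - 1 ∨ |w p| = n) := by
    ext p
    simp only [mem_symmDiff, mem_filter, mem_Icc, Perm.mul_apply, sgen_self_apply hn]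
    rw [abs_eq (by omega), abs_eq (by omega)]
    split_ifs <;> omega
  rw [hsymm]
  exact (even_card_symmDiff_iff hD).2 hw.2

theorem IsEvenSignedPerm.sgen_mul (hn : 2 ≤ n) (hi : 1 ≤ i) (hin : i ≤ n) {w : Perm ℤ}
    (hw : IsEvenSignedPerm n w) : IsEvenSignedPerm n (sgen n i * w) := by
  rcases eq_or_ne i n with rfl | hne
  · exact hw.sgen_self_mul hn
  refine ⟨(sgen_isSignedPerm hn hi hin).mul_s6 hw.1, ?_⟩
  rw [filter_congr fun p _ => show (sgen n i * w) p < 0 ↔ w p < 0 by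
    rw [Perm.mul_apply, sgen_apply_of_ne hi hne]; split_ifs <;> omega]
  exact hw.2

end Generators

/-- A pair `(x, y)` with `|x| ≠ |y|` stands for the root `e_x + e_y` of `D_n`, where
`e_{-a} = -e_a`. With the positive roots `e_a ± e_b` (`a < b`), `e_x + e_y` is negative iff
the one of `x`, `y` of smaller absolute value is negative. -/
def IsNegRoot (x y : ℤ) : Prop := (|x| < |y| ∧ x < 0) ∨ (|y| ≤ |x| ∧ y < 0)

instance (x y : ℤ) : Decidable (IsNegRoot x y) := by unfold IsNegRoot; infer_instance

/-- Each positive root of `D_n`, written once. -/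
noncomputable def posRoots (n : ℕ) : Finset (ℤ × ℤ) :=
  (Icc 1 (n : ℤ) ×ˢ Icc (-(n : ℤ)) n).filter fun r => r.1 < |r.2|

def IsInversion (w : Perm ℤ) (r : ℤ × ℤ) : Prop := IsNegRoot (w⁻¹ r.1) (w⁻¹ r.2)

instance (w : Perm ℤ) (r : ℤ × ℤ) : Decidable (IsInversion w r) := by
  unfold IsInversion; infer_instance

noncomputable def numInversions (n : ℕ) (w : Perm ℤ) : ℕ :=
  ((posRoots n).filter (IsInversion w)).card

def sortAbs (p : ℤ × ℤ) : ℤ × ℤ := if |p.1| < |p.2| then p else p.swap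

def simpleRoot (n i : ℕ) : ℤ × ℤ :=
  if i = n then ((n : ℤ) - 1, (n : ℤ)) else ((i : ℤ), -((i : ℤ) + 1))

section Roots

variable {n : ℕ}

theorem mem_posRoots {r : ℤ × ℤ} :
    r ∈ posRoots n ↔ 1 ≤ r.1 ∧ r.1 < |r.2| ∧ |r.2| ≤ n := by
  simp only [posRoots, mem_filter, mem_product, mem_Icc, Int.abs_eq_natAbs]
  omega

theorem inPM_of_mem_posRoots {r : ℤ × ℤ} (hr : r ∈ posRoots n) :
    inPM n r.1 ∧ inPM n r.2 := by
  rw [mem_posRoots] at hr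
  refine ⟨⟨by omega, ?_⟩, ⟨fun h => ?_, hr.2.2⟩⟩
  · rw [abs_of_pos (by omega : 0 < r.1)]; omega
  · rw [h, abs_zero] at hr; omega

theorem abs_ne_of_mem_posRoots {r : ℤ × ℤ} (hr : r ∈ posRoots n) : |r.1| ≠ |r.2| := by
  rw [mem_posRoots] at hr
  rw [abs_of_pos (by omega : 0 < r.1)]
  exact hr.2.1.ne

theorem isNegRoot_comm {x y : ℤ} (h : |x| ≠ |y|) : IsNegRoot x y ↔ IsNegRoot y x := by
  unfold IsNegRoot
  omega

theorem isNegRoot_neg {x y : ℤ} (hx : x ≠ 0) (hy : y ≠ 0) (h : |x| ≠ |y|) :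
    IsNegRoot (-x) (-y) ↔ ¬IsNegRoot x y := by
  unfold IsNegRoot
  rw [abs_neg, abs_neg]
  omega

theorem sortAbs_swap {p : ℤ × ℤ} (h : |p.1| ≠ |p.2|) : sortAbs p.swap = sortAbs p := by
  unfold sortAbs
  simp only [Prod.fst_swap, Prod.snd_swap, Prod.swap_swap]
  split_ifs <;> first | rfl | omega

theorem sortAbs_of_mem_posRoots {r : ℤ × ℤ} (hr : r ∈ posRoots n) : sortAbs r = r := by
  rw [mem_posRoots] at hr
  rw [sortAbs, if_pos (by rw [abs_of_pos (by omega : 0 < r.1)]; exact hr.2.1)]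

theorem sortAbs_mem_posRoots {x y : ℤ} (hx : inPM n x) (hy : inPM n y) (hxy : |x| ≠ |y|)
    (h : ¬IsNegRoot x y) : sortAbs (x, y) ∈ posRoots n := by
  obtain ⟨hx0, hxn⟩ := hx
  obtain ⟨hy0, hyn⟩ := hy
  unfold IsNegRoot at h
  unfold sortAbs
  rw [mem_posRoots]
  split_ifs <;> simp only [Prod.swap_prod_mk, Int.abs_eq_natAbs] at * <;> omega

theorem isInversion_sortAbs {w : Perm ℤ} (hw : IsSignedPerm n w) {p : ℤ × ℤ}
    (h : |p.1| ≠ |p.2|) : IsInversion w (sortAbs p) ↔ IsInversion w p := by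
  unfold sortAbs
  split_ifs
  · rfl
  · exact isNegRoot_comm (hw.inv.abs_apply_ne (Ne.symm h))

end Roots

def reflectRoot (s : Perm ℤ) (r : ℤ × ℤ) : ℤ × ℤ := sortAbs (s r.1, s r.2)

section Reflection

variable {n : ℕ} {s w : Perm ℤ}

theorem inv_mul_apply_of_mul_self_eq_one (hs2 : s * s = 1) (x : ℤ) :
    (s * w)⁻¹ x = w⁻¹ (s x) := by
  rw [mul_inv_rev, Perm.mul_apply, inv_eq_of_mul_eq_one_right hs2]

theorem reflectRoot_reflectRoot (hs2 : s * s = 1) {r : ℤ × ℤ} (hr : r ∈ posRoots n) :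
    reflectRoot s (reflectRoot s r) = r := by
  have hss : ∀ x, s (s x) = x := fun x => by rw [← Perm.mul_apply, hs2, Perm.one_apply]
  have : (s (reflectRoot s r).1, s (reflectRoot s r).2) = r ∨
      (s (reflectRoot s r).1, s (reflectRoot s r).2) = r.swap := by
    simp only [reflectRoot, sortAbs]
    split_ifs <;> simp [hss, Prod.swap]
  rcases this with h | h
  · rw [reflectRoot, h, sortAbs_of_mem_posRoots hr]
  · rw [reflectRoot, h, sortAbs_swap (abs_ne_of_mem_posRoots hr), sortAbs_of_mem_posRoots hr]

theorem reflectRoot_mem_erase (hs : IsSignedPerm n s) (hs2 : s * s = 1) {α : ℤ × ℤ}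
    (hα : α ∈ posRoots n) (hsα : s α.1 = -α.2 ∧ s α.2 = -α.1)
    (hroots : ∀ r ∈ posRoots n, r ≠ α → ¬IsNegRoot (s r.1) (s r.2)) {r : ℤ × ℤ}
    (hr : r ∈ (posRoots n).erase α) : reflectRoot s r ∈ (posRoots n).erase α := by
  obtain ⟨hne, hr⟩ := mem_erase.1 hr
  obtain ⟨hr1, hr2⟩ := inPM_of_mem_posRoots hr
  refine mem_erase.2 ⟨fun h => ?_, sortAbs_mem_posRoots (hs.inPM_apply hr1) (hs.inPM_apply hr2)
    (hs.abs_apply_ne (abs_ne_of_mem_posRoots hr)) (hroots r hr hne)⟩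
  have hrα : r = reflectRoot s α := by rw [← h, reflectRoot_reflectRoot hs2 hr]
  rw [mem_posRoots] at hα hr
  rw [hrα, reflectRoot, sortAbs, hsα.1, hsα.2, abs_neg, abs_neg,
    if_neg (by rw [abs_of_pos (by omega : 0 < α.1)]; omega)] at hr
  exact absurd hr.1 (by simp only [Prod.swap_prod_mk]; omega)

theorem isInversion_mul_iff (hw : IsSignedPerm n w) (hs : IsSignedPerm n s) (hs2 : s * s = 1)
    {r : ℤ × ℤ} (hr : r ∈ posRoots n) :
    IsInversion (s * w) r ↔ IsInversion w (reflectRoot s r) := by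
  rw [reflectRoot, isInversion_sortAbs hw (hs.abs_apply_ne (abs_ne_of_mem_posRoots hr))]
  simp only [IsInversion, inv_mul_apply_of_mul_self_eq_one hs2]

theorem isInversion_mul_iff_not (hw : IsSignedPerm n w) (hs2 : s * s = 1) {α : ℤ × ℤ}
    (hα : α ∈ posRoots n) (hsα : s α.1 = -α.2 ∧ s α.2 = -α.1) :
    IsInversion (s * w) α ↔ ¬IsInversion w α := by
  obtain ⟨h1, h2⟩ := inPM_of_mem_posRoots hα
  have hne := hw.inv.abs_apply_ne (abs_ne_of_mem_posRoots hα)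
  simp only [IsInversion, inv_mul_apply_of_mul_self_eq_one hs2, hsα, hw.inv.1]
  rw [isNegRoot_neg (hw.inv.inPM_apply h2).1 (hw.inv.inPM_apply h1).1 hne.symm,
    isNegRoot_comm hne]

/-- `reflectRoot s` is an involution of the positive roots other than `α` that transports the
inversions of `s * w` to those of `w`, and `α` is an inversion of exactly one of them. -/
theorem numInversions_reflection_mul (hw : IsSignedPerm n w) (hs : IsSignedPerm n s)
    (hs2 : s * s = 1) {α : ℤ × ℤ} (hα : α ∈ posRoots n)
    (hsα : s α.1 = -α.2 ∧ s α.2 = -α.1)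
    (hroots : ∀ r ∈ posRoots n, r ≠ α → ¬IsNegRoot (s r.1) (s r.2)) :
    (IsInversion w α → numInversions n w = numInversions n (s * w) + 1) ∧
    (¬IsInversion w α → numInversions n (s * w) = numInversions n w + 1) := by
  have hmem := fun r (hr : r ∈ (posRoots n).erase α) =>
    reflectRoot_mem_erase hs hs2 hα hsα hroots hr
  have hinvol := fun r (hr : r ∈ (posRoots n).erase α) =>
    reflectRoot_reflectRoot hs2 (mem_of_mem_erase hr)
  have hrest : ∑ r ∈ (posRoots n).erase α, (if IsInversion (s * w) r then 1 else 0) =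
      ∑ r ∈ (posRoots n).erase α, (if IsInversion w r then 1 else 0) :=
    sum_nbij' (reflectRoot s) (reflectRoot s) hmem hmem hinvol hinvol fun r hr => by
      simp only [isInversion_mul_iff hw hs hs2 (mem_of_mem_erase hr)]
  have hsplit : ∀ v, numInversions n v = (if IsInversion v α then 1 else 0) +
      ∑ r ∈ (posRoots n).erase α, (if IsInversion v r then 1 else 0) := fun v => by
    rw [numInversions, card_filter, ← add_sum_erase _ _ hα]
  rw [hsplit w, hsplit (s * w), hrest, if_congr (isInversion_mul_iff_not hw hs2 hα hsα) rfl rfl]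
  constructor <;> intro h <;> simp only [h, if_true, if_false, not_true, not_false_iff] <;> omega

end Reflection

section SimpleRoots

variable {n i : ℕ}

theorem simpleRoot_mem_posRoots (hn : 2 ≤ n) (hi : 1 ≤ i) (hin : i ≤ n) :
    simpleRoot n i ∈ posRoots n := by
  rw [mem_posRoots, simpleRoot]
  split_ifs <;> dsimp only <;> simp only [Int.abs_eq_natAbs] <;> omega

theorem sgen_simpleRoot (hn : 2 ≤ n) (hi : 1 ≤ i) :
    sgen n i (simpleRoot n i).1 = -(simpleRoot n i).2 ∧
      sgen n i (simpleRoot n i).2 = -(simpleRoot n i).1 := by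
  rw [simpleRoot]
  rcases eq_or_ne i n with rfl | hne
  · simp only [↓reduceIte, sgen_self_apply hn, true_and]; split_ifs <;> omega
  · simp only [if_neg hne, sgen_apply_of_ne hi hne]; split_ifs <;> omega

theorem sgen_not_isNegRoot (hn : 2 ≤ n) (hi : 1 ≤ i) {r : ℤ × ℤ}
    (hr : r ∈ posRoots n) (hne : r ≠ simpleRoot n i) :
    ¬IsNegRoot (sgen n i r.1) (sgen n i r.2) := by
  obtain ⟨a, y⟩ := r
  rw [mem_posRoots] at hr
  rw [Ne, simpleRoot] at hne
  unfold IsNegRoot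
  rcases eq_or_ne i n with rfl | hin'
  · simp only [↓reduceIte, Prod.mk.injEq, sgen_self_apply hn, Int.abs_eq_natAbs] at *
    split_ifs <;> omega
  · simp only [if_neg hin', Prod.mk.injEq, sgen_apply_of_ne hi hin', Int.abs_eq_natAbs] at *
    split_ifs <;> omega

theorem numInversions_sgen_mul (hn : 2 ≤ n) (hi : 1 ≤ i) (hin : i ≤ n) {w : Perm ℤ}
    (hw : IsSignedPerm n w) :
    (IsInversion w (simpleRoot n i) →
      numInversions n w = numInversions n (sgen n i * w) + 1) ∧
    (¬IsInversion w (simpleRoot n i) →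
      numInversions n (sgen n i * w) = numInversions n w + 1) :=
  numInversions_reflection_mul hw (sgen_isSignedPerm hn hi hin) (sgen_mul_self hn hi)
    (simpleRoot_mem_posRoots hn hi hin) (sgen_simpleRoot hn hi)
    fun _ hr hne => sgen_not_isNegRoot hn hi hr hne

theorem not_isInversion_simpleRoot_iff (hi : 1 ≤ i) (hin : i < n) {w : Perm ℤ}
    (hw : IsSignedPerm n w) :
    ¬IsInversion w (simpleRoot n i) ↔ dkey n (w⁻¹ i) < dkey n (w⁻¹ (i + 1)) := by
  have hp := hw.inPM_inv_apply_s6 (j := i) (by omega) (by omega)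
  have hq := hw.inPM_inv_apply_s6 (j := i + 1) (by omega) (by omega)
  have hpq : |w⁻¹ (i : ℤ)| ≠ |w⁻¹ ((i : ℤ) + 1)| :=
    hw.inv.abs_apply_ne (by rw [abs_of_pos, abs_of_pos] <;> omega)
  rw [IsInversion, simpleRoot, if_neg hin.ne, hw.inv.1, dkey_lt_iff hp hq]
  obtain ⟨hp0, hpn⟩ := hp
  obtain ⟨hq0, hqn⟩ := hq
  unfold IsNegRoot
  simp only [abs_neg, Int.abs_eq_natAbs] at *
  omega

theorem inv_sgen_mul_apply_left (hi : 1 ≤ i) (hin : i < n) (w : Perm ℤ) :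
    (sgen n i * w)⁻¹ i = w⁻¹ (i + 1) := by
  rw [inv_mul_apply_of_mul_self_eq_one (sgen_mul_self (by omega) hi),
    sgen_apply_of_ne hi hin.ne, if_pos rfl]

theorem inv_sgen_mul_apply_right (hi : 1 ≤ i) (hin : i < n) (w : Perm ℤ) :
    (sgen n i * w)⁻¹ (i + 1) = w⁻¹ i := by
  rw [inv_mul_apply_of_mul_self_eq_one (sgen_mul_self (by omega) hi),
    sgen_apply_of_ne hi hin.ne, if_neg (by omega), if_pos rfl]

end SimpleRoots

section Descents

variable {n : ℕ} {w : Perm ℤ}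

theorem inv_apply_pos_of_not_isInversion (hw : IsSignedPerm n w) {j : ℕ} (h1 : 1 ≤ j)
    (h2 : j < n) (h : ¬IsInversion w (simpleRoot n j)) (hpos : 0 < w⁻¹ ((j : ℤ) + 1)) :
    0 < w⁻¹ (j : ℤ) ∧ w⁻¹ (j : ℤ) < w⁻¹ ((j : ℤ) + 1) := by
  have := (dkey_lt_iff (hw.inPM_inv_apply_s6 (by omega) (by omega))
    (hw.inPM_inv_apply_s6 (by omega) (by omega))).1
    ((not_isInversion_simpleRoot_iff h1 h2 hw).1 h)
  omega

theorem inv_apply_pred_pos_of_not_isInversion (hn : 2 ≤ n) (hw : IsSignedPerm n w)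
    (h₁ : ¬IsInversion w (simpleRoot n (n - 1))) (h₂ : ¬IsInversion w (simpleRoot n n)) :
    0 < w⁻¹ ((n : ℤ) - 1) := by
  have hc := (not_isInversion_simpleRoot_iff (by omega) (by omega) hw).1 h₁
  have hcast : ((n - 1 : ℕ) : ℤ) = (n : ℤ) - 1 := by omega
  rw [hcast, sub_add_cancel] at hc
  have ha := hw.inPM_inv_apply_s6 (j := (n : ℤ) - 1) (by omega) (by omega)
  have hb := hw.inPM_inv_apply_s6 (j := (n : ℤ)) (by omega) le_rfl
  rw [dkey_lt_iff ha hb] at hc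
  rw [IsInversion, simpleRoot, if_pos rfl] at h₂
  unfold IsNegRoot at h₂
  obtain ⟨ha0, -⟩ := ha
  obtain ⟨hb0, -⟩ := hb
  simp only [Int.abs_eq_natAbs] at h₂
  omega

/-- Without descents, `w⁻¹` is positive and increasing on `1, …, n-1`; evenness then forces
`w⁻¹ n > 0`, so `w⁻¹` is increasing on `1, …, n` with values in `1, …, n`. -/
theorem eq_one_of_forall_not_isInversion (hn : 2 ≤ n) (hw : IsEvenSignedPerm n w)
    (h : ∀ i, 1 ≤ i → i ≤ n → ¬IsInversion w (simpleRoot n i)) : w = 1 := by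
  have hstep : ∀ j : ℤ, 1 ≤ j → j < n → 0 < w⁻¹ (j + 1) →
      0 < w⁻¹ j ∧ w⁻¹ j < w⁻¹ (j + 1) := by
    intro j h1 h2 hpos
    lift j to ℕ using (by omega)
    exact inv_apply_pos_of_not_isInversion hw.1 (by omega) (by omega)
      (h j (by omega) (by omega)) hpos
  have hpos : ∀ j : ℤ, j ≤ n - 1 → 1 ≤ j → 0 < w⁻¹ j := by
    intro j hj
    induction j, hj using Int.leInductionDown with
    | base =>
      exact fun _ => inv_apply_pred_pos_of_not_isInversion hn hw.1
        (h (n - 1) (by omega) (by omega)) (h n (by omega) le_rfl)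
    | pred j hj ih =>
      exact fun h1 =>
        (hstep (j - 1) h1 (by omega) (by rw [sub_add_cancel]; exact ih (by omega))).1
  have hlast : 0 < w⁻¹ (n : ℤ) := by
    by_contra hneg
    have hnz := (hw.1.inPM_inv_apply_s6 (j := (n : ℤ)) (by omega) le_rfl).1
    have hneg_set : (Icc 1 (n : ℤ)).filter (fun j => w⁻¹ j < 0) = {(n : ℤ)} := by
      ext j
      simp only [mem_filter, mem_Icc, mem_singleton]
      constructor
      · rintro ⟨⟨h1, h2⟩, hj⟩
        by_contra hne
        exact absurd (hpos j (by omega) h1) (by omega)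
      · rintro rfl
        exact ⟨⟨by omega, le_rfl⟩, by omega⟩
    have := hw.inv.2
    rw [hneg_set, card_singleton] at this
    exact Nat.not_even_one this
  have hallpos : ∀ j : ℤ, 1 ≤ j → j ≤ n → 0 < w⁻¹ j := fun j h1 h2 =>
    (eq_or_lt_of_le h2).elim (fun h => h ▸ hlast) fun h => hpos j (by omega) h1
  have hfix : ∀ j : ℤ, 1 ≤ j → j ≤ n → w⁻¹ j = j := fun j h1 h2 =>
    Int.eq_self_of_forall_lt_succ (f := ⇑w⁻¹)
      (fun k h1 h2 => (hstep k h1 h2 (hallpos (k + 1) (by omega) (by omega))).2)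
      (fun k h1 h2 => ⟨hallpos k h1 h2, (abs_le.1 (hw.1.inPM_inv_apply_s6 h1 h2).2).2⟩) h1 h2
  exact inv_eq_one.1 (hw.1.inv.eq_one_of_forall hfix)

end Descents

section Length

variable {n : ℕ}

theorem wordProd_cons (j : ℕ) (l : List ℕ) : wordProd n (j :: l) = sgen n j * wordProd n l := by
  rw [wordProd, List.map_cons, List.prod_cons, wordProd]

theorem numInversions_one : numInversions n 1 = 0 := by
  rw [numInversions, card_eq_zero, filter_eq_empty_iff]
  intro r hr
  rw [mem_posRoots] at hr
  simp only [IsInversion, IsNegRoot, inv_one, Perm.one_apply, Int.abs_eq_natAbs] at hr ⊢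
  omega

theorem numInversions_wordProd_le (hn : 2 ≤ n) {l : List ℕ}
    (hl : ∀ j ∈ l, 1 ≤ j ∧ j ≤ n) :
    IsSignedPerm n (wordProd n l) ∧ numInversions n (wordProd n l) ≤ l.length := by
  induction l with
  | nil => exact ⟨IsSignedPerm.one, by simp [wordProd, numInversions_one]⟩
  | cons j l ih =>
    obtain ⟨hj1, hj2⟩ := hl j List.mem_cons_self
    obtain ⟨hsigned, hle⟩ := ih fun x hx => hl x (List.mem_cons_of_mem j hx)
    have hstep := numInversions_sgen_mul hn hj1 hj2 hsigned
    rw [wordProd_cons, List.length_cons]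
    refine ⟨(sgen_isSignedPerm hn hj1 hj2).mul_s6 hsigned, ?_⟩
    by_cases h : IsInversion (wordProd n l) (simpleRoot n j)
    · have := hstep.1 h
      omega
    · have := hstep.2 h
      omega

theorem exists_wordProd_eq (hn : 2 ≤ n) {w : Perm ℤ} (hw : IsEvenSignedPerm n w) :
    ∃ l : List ℕ, (∀ j ∈ l, 1 ≤ j ∧ j ≤ n) ∧ l.length = numInversions n w ∧
      wordProd n l = w := by
  induction hm : numInversions n w using Nat.strong_induction_on generalizing w with
  | _ m ih =>
  by_cases hd : ∃ i, 1 ≤ i ∧ i ≤ n ∧ IsInversion w (simpleRoot n i)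
  · obtain ⟨i, hi1, hi2, hinv⟩ := hd
    have hdrop := (numInversions_sgen_mul hn hi1 hi2 hw.1).1 hinv
    obtain ⟨l, hl, hlen, hprod⟩ := ih _ (by omega) (hw.sgen_mul hn hi1 hi2) rfl
    refine ⟨i :: l, ?_, by rw [List.length_cons]; omega, ?_⟩
    · exact fun j hj => (List.mem_cons.1 hj).elim (fun h => h ▸ ⟨hi1, hi2⟩) (hl j)
    · rw [wordProd_cons, hprod, ← mul_assoc, sgen_mul_self hn hi1, one_mul]
  · push Not at hd
    obtain rfl := eq_one_of_forall_not_isInversion hn hw hd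
    rw [numInversions_one] at hm
    exact ⟨[], by simp, by simp [hm], rfl⟩

theorem dLength_eq_numInversions (hn : 2 ≤ n) {w : Perm ℤ} (hw : IsEvenSignedPerm n w) :
    DLength n w = numInversions n w := by
  obtain ⟨l, hl, hlen, hprod⟩ := exists_wordProd_eq hn hw
  refine le_antisymm (Nat.sInf_le ⟨l, hl, hlen, hprod⟩) (le_csInf ⟨_, l, hl, rfl, hprod⟩ ?_)
  rintro k ⟨l', hl', rfl, hprod'⟩
  exact hprod' ▸ (numInversions_wordProd_le hn hl').2

end Length

section Hopping

variable {n i : ℕ}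

theorem hop_eq_self_of_forall_not_hopStep {t : ℤ} {L : List ℤ} {w : Perm ℤ}
    (h : ∀ q ∈ L, ¬HopStep n w t q) : hop n t L w = w := by
  have hnone : L.reverse.find? (fun q => decide (HopStep n w t q)) = none :=
    List.find?_eq_none.2 fun q hq => by simpa using h q (List.mem_reverse.1 hq)
  rw [hop, hnone]

theorem hop_singleton_of_hopStep {t q : ℤ} {w : Perm ℤ} (h : HopStep n w t q) :
    hop n t [q] w = hop n t [q] (hswap t q * w) := by
  have hsome : [q].reverse.find? (fun q => decide (HopStep n w t q)) = some q := by
    simp [h]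
  rw [hop, hsome]

theorem hswap_eq_sgen (hin : i ≠ n) : hswap i (i + 1) = sgen n i := by
  rw [hswap, if_neg (by omega), sgen, if_neg hin]

theorem hopStep_iff_dkey_lt (hi : 1 ≤ i) (hin : i < n) {w : Perm ℤ} (hw : IsSignedPerm n w) :
    HopStep n w i (i + 1) ↔ dkey n (w⁻¹ i) < dkey n (w⁻¹ (i + 1)) := by
  have hdlt : dlt n i (i + 1) := by
    unfold dlt dkey
    split_ifs <;> omega
  exact ⟨fun h => h.2.2.1, fun h => ⟨⟨by omega, by rw [abs_of_pos] <;> omega⟩, hdlt, h,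
    dkey_le (hw.inPM_inv_apply_s6 (by omega) (by omega))⟩⟩

end Hopping

section LengthComparison

variable {n i : ℕ} {w : Perm ℤ}

theorem dLength_lt_dLength_sgen_mul (hi : 1 ≤ i) (hin : i < n) (hw : IsEvenSignedPerm n w)
    (h : dkey n (w⁻¹ i) < dkey n (w⁻¹ (i + 1))) :
    DLength n w < DLength n (sgen n i * w) := by
  have hn : 2 ≤ n := by omega
  rw [dLength_eq_numInversions hn hw, dLength_eq_numInversions hn (hw.sgen_mul hn hi hin.le),
    (numInversions_sgen_mul hn hi hin.le hw.1).2
      ((not_isInversion_simpleRoot_iff hi hin hw.1).2 h)]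
  exact Nat.lt_succ_self _

theorem dLength_sgen_mul_lt_dLength (hi : 1 ≤ i) (hin : i < n) (hw : IsEvenSignedPerm n w)
    (h : dkey n (w⁻¹ (i + 1)) < dkey n (w⁻¹ i)) :
    DLength n (sgen n i * w) < DLength n w := by
  have hn : 2 ≤ n := by omega
  have := dLength_lt_dLength_sgen_mul hi hin (hw.sgen_mul hn hi hin.le) (by
    rwa [inv_sgen_mul_apply_left hi hin, inv_sgen_mul_apply_right hi hin])
  rwa [← mul_assoc, sgen_mul_self hn hi, one_mul] at this

end LengthComparison

theorem demazure_simple_gen_as_hopping_general (n : ℕ)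
    (dem : Perm ℤ → Perm ℤ → Perm ℤ) (hdem : IsDemazure n dem)
    (i : ℕ) (hi : 1 ≤ i) (hi' : i ≤ n - 1)
    (w : Perm ℤ) (hw : IsEvenSignedPerm n w) :
    dem (sgen n i) w = hop n (i : ℤ) [(i : ℤ) + 1] (sgen n i * w) := by
  have hn : 2 ≤ n := by omega
  have hin : i < n := by omega
  have hsw := (hw.sgen_mul hn hi hin.le).1
  have hne : dkey n (w⁻¹ i) ≠ dkey n (w⁻¹ (i + 1)) := fun h => by
    have := w⁻¹.injective (dkey_injOn (hw.1.inPM_inv_apply_s6 (by omega) (by omega))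
      (hw.1.inPM_inv_apply_s6 (by omega) (by omega)) h)
    omega
  obtain ⟨hasc, hdesc⟩ := hdem.2.2.2 i hi hin.le w hw
  rcases hne.lt_or_gt with hlt | hgt
  · rw [hasc (dLength_lt_dLength_sgen_mul hi hin hw hlt), hop_eq_self_of_forall_not_hopStep]
    simp only [List.mem_singleton, forall_eq, hopStep_iff_dkey_lt hi hin hsw,
      inv_sgen_mul_apply_left hi hin, inv_sgen_mul_apply_right hi hin]
    exact hlt.asymm
  · have hstep : HopStep n (sgen n i * w) i (i + 1) := by
      rwa [hopStep_iff_dkey_lt hi hin hsw, inv_sgen_mul_apply_left hi hin,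
        inv_sgen_mul_apply_right hi hin]
    rw [hdesc (dLength_sgen_mul_lt_dLength hi hin hw hgt), hop_singleton_of_hopStep hstep,
      hswap_eq_sgen hin.ne, ← mul_assoc, sgen_mul_self hn hi, one_mul,
      hop_eq_self_of_forall_not_hopStep]
    simp only [List.mem_singleton, forall_eq, hopStep_iff_dkey_lt hi hin hw.1]
    exact hgt.asymm

/-- for `1 ≤ i ≤ n-1` and `w ∈ D_n`, `s_i ⋆ w = h_{i,[i+1]}(s_i·w)`. -/
theorem demazure_simple_gen_as_hopping (n : ℕ) (hn : 2 ≤ n)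
    (dem : Perm ℤ → Perm ℤ → Perm ℤ) (hdem : IsDemazure n dem)
    (i : ℕ) (hi : 1 ≤ i) (hi' : i ≤ n - 1)
    (w : Perm ℤ) (hw : IsEvenSignedPerm n w) :
    dem (sgen n i) w = hop n (i : ℤ) [(i : ℤ) + 1] (sgen n i * w) :=
  demazure_simple_gen_as_hopping_general n dem hdem i hi hi' w hw
end
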